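/- arXiv:2511.01931 — 2 statements merged into one kernel-verified Lean document; each statement's English description precedes it below -/
import Mathlib

section
/- Let (L, [p]) be a finite-dimensional restricted Lie algebra over a field of characteristic p > 0. Then for every x ∈ L there exists a positive integer k such that x^{[p]^k} is semisimple. -/
open scoped TensorProduct

/-- Iterated adjoint action: `adIter z n w = (ad z)^n w`. -/
def adIter {L : Type*} [LieRing L] (z : L) : ℕ → L → L
  | 0, w => w
  | n+1, w => ⁅z, adIter z n w⁆

/-- A `p`-semilinear map between `F`-vector spaces. -/
def IsPSemilinear (p : ℕ) (F : Type*) [Field F] {V W : Type*}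
    [AddCommGroup V] [Module F V] [AddCommGroup W] [Module F W] (f : V → W) : Prop :=
  ∀ (a : F) (x y : V), f (a • x + y) = a ^ p • f x + f y

/-- `pm` is a `p`-mapping on the Lie algebra `L` over `F`. -/
structure IsPMap (p : ℕ) (F : Type*) [Field F] (L : Type*) [LieRing L] [LieAlgebra F L]
    (pm : L → L) : Prop where
  ad_pow : ∀ a x : L, ⁅pm a, x⁆ = adIter a p x
  smul_pow : ∀ (c : F) (a : L), pm (c • a) = c ^ p • pm a
  add_pow : ∀ a b : L, ∃ s : Fin (p - 1) → L,
    adIter ((Polynomial.X : Polynomial F) ⊗ₜ[F] a + (1 : Polynomial F) ⊗ₜ[F] b) (p - 1)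
        ((1 : Polynomial F) ⊗ₜ[F] a)
      = (∑ j : Fin (p - 1), ((j : ℕ) + 1) •
          (((Polynomial.X : Polynomial F) ^ (j : ℕ)) ⊗ₜ[F] s j)) ∧
    pm (a + b) = pm a + pm b + ∑ j : Fin (p - 1), s j

/-- `H` is a `p`-subalgebra w.r.t. the map `pm`. -/
def IsPSubalgebra (F : Type*) [Field F] {L : Type*} [LieRing L] [LieAlgebra F L]
    (pm : L → L) (H : LieSubalgebra F L) : Prop :=
  ∀ x ∈ H, pm x ∈ H

/-- The `p`-subalgebra generated by a set `S`. -/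
def pSpan (F : Type*) [Field F] {L : Type*} [LieRing L] [LieAlgebra F L]
    (pm : L → L) (S : Set L) : LieSubalgebra F L :=
  sInf {H : LieSubalgebra F L | IsPSubalgebra F pm H ∧ S ⊆ H}

/-- An element `x` is semisimple if it lies in the `p`-subalgebra generated by `pm x`. -/
def IsSemisimpleElt (F : Type*) [Field F] {L : Type*} [LieRing L] [LieAlgebra F L]
    (pm : L → L) (x : L) : Prop :=
  x ∈ pSpan F pm {pm x}

/-- An element is `p`-nilpotent if some iterate of the `p`-map kills it. -/
def IsPNilpotentElt {L : Type*} (pm : L → L) [Zero L] (x : L) : Prop :=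
  ∃ n : ℕ, pm^[n] x = 0

/-! Since `pm y` lies in the `p`-subalgebra generated by `y`, the `p`-subalgebras generated by the
iterates `x^{[p]^k}` form a descending chain. In finite dimension this chain becomes stationary, and
once the subalgebras generated by `x^{[p]^k}` and by `x^{[p]^(k+1)}` agree, `x^{[p]^k}` is
semisimple. -/

instance LieSubalgebra.wellFoundedLT_of_isArtinian (R L : Type*) [CommRing R] [LieRing L]
    [LieAlgebra R L] [IsArtinian R L] : WellFoundedLT (LieSubalgebra R L) :=
  RelHomClass.isWellFounded (⟨LieSubalgebra.toSubmodule, fun h ↦ h⟩ : _ →r (· < ·))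

section PSpan

variable {F : Type*} [Field F] {L : Type*} [LieRing L] [LieAlgebra F L] (pm : L → L)

theorem subset_pSpan (S : Set L) : S ⊆ pSpan F pm S := fun _ hs ↦ by
  rw [pSpan, LieSubalgebra.coe_sInf]
  exact Set.mem_iInter₂.mpr fun _ hH ↦ hH.2 hs

theorem isPSubalgebra_pSpan (S : Set L) : IsPSubalgebra F pm (pSpan F pm S) := fun y hy ↦ by
  rw [← SetLike.mem_coe, pSpan, LieSubalgebra.coe_sInf] at hy ⊢
  exact Set.mem_iInter₂.mpr fun H hH ↦ hH.1 y (Set.mem_iInter₂.mp hy H hH)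

theorem pSpan_le {S : Set L} {H : LieSubalgebra F L} (hH : IsPSubalgebra F pm H) (hS : S ⊆ H) :
    pSpan F pm S ≤ H :=
  sInf_le ⟨hH, hS⟩

theorem pSpan_singleton_le_iff {y : L} {H : LieSubalgebra F L} (hH : IsPSubalgebra F pm H) :
    pSpan F pm {y} ≤ H ↔ y ∈ H :=
  ⟨fun h ↦ h (subset_pSpan pm {y} rfl), fun hy ↦ pSpan_le pm hH (Set.singleton_subset_iff.mpr hy)⟩

theorem pSpan_singleton_pm_le (y : L) : pSpan F pm {pm y} ≤ pSpan F pm {y} :=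
  (pSpan_singleton_le_iff pm (isPSubalgebra_pSpan pm _)).mpr
    (isPSubalgebra_pSpan pm _ y (subset_pSpan pm {y} rfl))

theorem isSemisimpleElt_iff_pSpan_singleton_pm_eq (y : L) :
    IsSemisimpleElt F pm y ↔ pSpan F pm {pm y} = pSpan F pm {y} := by
  rw [IsSemisimpleElt, ← pSpan_singleton_le_iff pm (isPSubalgebra_pSpan pm _),
    le_antisymm_iff, and_iff_right (pSpan_singleton_pm_le pm y)]

theorem antitone_pSpan_singleton_iterate (x : L) :
    Antitone fun k ↦ pSpan F pm {pm^[k] x} :=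
  antitone_nat_of_succ_le fun k ↦ by
    simpa only [Function.iterate_succ_apply'] using pSpan_singleton_pm_le pm (pm^[k] x)

end PSpan

theorem exists_iterate_pMap_isSemisimpleElt_general
    (F : Type*) [Field F]
    {L : Type*} [LieRing L] [LieAlgebra F L] [FiniteDimensional F L]
    (pm : L → L) (x : L) :
    ∃ k : ℕ, 0 < k ∧ IsSemisimpleElt F pm (pm^[k] x) := by
  obtain ⟨n, hn⟩ :=
    WellFoundedLT.antitone_chain_condition (antitone_pSpan_singleton_iterate (F := F) pm x)
  refine ⟨n + 1, n.succ_pos, ?_⟩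
  rw [isSemisimpleElt_iff_pSpan_singleton_pm_eq, ← Function.iterate_succ_apply' pm, ← hn (n + 2),
    ← hn (n + 1)] <;> omega

/-- In a finite-dimensional restricted Lie algebra, for every `x` some iterate
`x^{[p]^k}` (with `k ≥ 1`) is semisimple. -/
theorem exists_iterate_pMap_isSemisimpleElt (p : ℕ) [Fact p.Prime]
    (F : Type*) [Field F] [CharP F p]
    {L : Type*} [LieRing L] [LieAlgebra F L] [FiniteDimensional F L]
    (pm : L → L) (hpm : IsPMap p F L pm) (x : L) :
    ∃ k : ℕ, 0 < k ∧ IsSemisimpleElt F pm (pm^[k] x) :=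
  exists_iterate_pMap_isSemisimpleElt_general F pm x
end

section
/- Let F be a perfect field of characteristic p > 0 and (L, [p]) a finite-dimensional restricted Lie algebra over F. Then every x ∈ L has a unique decomposition x = x_s + x_n with x_s semisimple, x_n p-nilpotent, and [x_s, x_n] = 0. -/
open scoped TensorProduct

/-!
On a subspace `C` of pairwise commuting elements closed under `pm`, the `p`-map is additive and
`p`-semilinear, so over a perfect field `pm '' C` is again a subspace, and Fitting's argument for
the descending chain `C ⊇ pm(C) ⊇ pm²(C) ⊇ ⋯` goes through: on its stable part `V` the map `pm`
is bijective, and every element of such a subspace is semisimple. For `C` the envelope of `x`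
this yields a semisimple `x_s ∈ C` with `pm^[N] x_s = pm^[N] x`, and `x_n = x - x_s` is
`p`-nilpotent. Any other semisimple part commutes with `x_s` and also agrees with `x` after
enough applications of `pm`; on the envelope of the two, which is spanned by semisimple elements,
`pm` is injective, so they coincide.
-/

open Polynomial

theorem adIter_eq_zero {L : Type*} [LieRing L] {z w : L} (h : ⁅z, w⁆ = 0) :
    ∀ {n : ℕ}, n ≠ 0 → adIter z n w = 0
  | 1, _ => h
  | n + 2, _ => show ⁅z, adIter z (n + 1) w⁆ = 0 by
      rw [adIter_eq_zero h n.succ_ne_zero, lie_zero]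

theorem eq_zero_of_sum_X_pow_tmul_eq_zero {R M : Type*} [CommRing R] [AddCommGroup M]
    [Module R M] {n : ℕ} {m : Fin n → M}
    (h : ∑ j : Fin n, ((X : R[X]) ^ (j : ℕ)) ⊗ₜ[R] m j = 0) (j : Fin n) : m j = 0 := by
  have := congrArg (fun t => TensorProduct.lid R M ((lcoeff R (j : ℕ)).rTensor M t)) h
  simpa [map_sum, coeff_X_pow, Fin.val_inj, eq_comm] using this

theorem eq_zero_of_nsmul_eq_zero {p : ℕ} {F V : Type*} [Field F] [CharP F p] [AddCommGroup V]
    [Module F V] {n : ℕ} {v : V} (h : n • v = 0) (hn : ¬p ∣ n) : v = 0 := by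
  rw [← Nat.cast_smul_eq_nsmul F] at h
  exact (smul_eq_zero.1 h).resolve_left fun hc => hn ((CharP.cast_eq_zero_iff F p n).1 hc)

namespace IsPMap

variable {p : ℕ} {F : Type*} [Field F] {L : Type*} [LieRing L] [LieAlgebra F L] {pm : L → L}

theorem iterate_smul (hpm : IsPMap p F L pm) (c : F) (a : L) (k : ℕ) :
    pm^[k] (c • a) = c ^ p ^ k • pm^[k] a := by
  induction k with
  | zero => simp
  | succ k ih =>
    simp only [Function.iterate_succ_apply']
    rw [ih, hpm.smul_pow, ← pow_mul, pow_succ]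

variable [Fact p.Prime]

theorem map_zero (hpm : IsPMap p F L pm) : pm 0 = 0 := by
  simpa [zero_pow (Fact.out : p.Prime).ne_zero] using hpm.smul_pow 0 0

theorem lie_apply_left_eq_zero (hpm : IsPMap p F L pm) {a b : L} (h : ⁅a, b⁆ = 0) :
    ⁅pm a, b⁆ = 0 := by
  rw [hpm.ad_pow]
  exact adIter_eq_zero h (Fact.out : p.Prime).ne_zero

theorem lie_iterate_left_eq_zero (hpm : IsPMap p F L pm) {a b : L} (h : ⁅a, b⁆ = 0) (i : ℕ) :
    ⁅pm^[i] a, b⁆ = 0 := by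
  induction i with
  | zero => exact h
  | succ i ih => rw [Function.iterate_succ_apply']; exact hpm.lie_apply_left_eq_zero ih

theorem lie_iterate_eq_zero (hpm : IsPMap p F L pm) {a b : L} (h : ⁅a, b⁆ = 0) (i j : ℕ) :
    ⁅pm^[i] a, pm^[j] b⁆ = 0 := by
  have h' : ⁅b, pm^[i] a⁆ = 0 := by rw [← lie_skew, hpm.lie_iterate_left_eq_zero h, neg_zero]
  rw [← lie_skew, hpm.lie_iterate_left_eq_zero h', neg_zero]

variable [CharP F p]

/-- For commuting `a, b` the correction terms `s j` vanish: the bracket they are read off from is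
already zero, and `j + 1 < p` is invertible in `F`. -/
theorem map_add_of_lie_eq_zero (hpm : IsPMap p F L pm) {a b : L} (h : ⁅a, b⁆ = 0) :
    pm (a + b) = pm a + pm b := by
  obtain ⟨s, hs, hsum⟩ := hpm.add_pow a b
  have hp := (Fact.out : p.Prime).two_le
  have hlie : ⁅(X : F[X]) ⊗ₜ[F] a + (1 : F[X]) ⊗ₜ[F] b, (1 : F[X]) ⊗ₜ[F] a⁆ = 0 := by
    rw [add_lie (L := F[X] ⊗[F] L) (M := F[X] ⊗[F] L), LieAlgebra.ExtendScalars.bracket_tmul,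
      LieAlgebra.ExtendScalars.bracket_tmul, lie_self, ← lie_skew, h]
    simp
  rw [adIter_eq_zero hlie (by omega)] at hs
  have hs0 (j : Fin (p - 1)) : s j = 0 := by
    refine eq_zero_of_nsmul_eq_zero (F := F) (n := j + 1) ?_
      (Nat.not_dvd_of_pos_of_lt j.val.succ_pos (by omega))
    refine eq_zero_of_sum_X_pow_tmul_eq_zero (R := F)
      (m := fun j : Fin (p - 1) => ((j : ℕ) + 1) • s j) ?_ j
    simpa [TensorProduct.tmul_smul] using hs.symm
  simp [hsum, hs0]

theorem map_sub_of_lie_eq_zero (hpm : IsPMap p F L pm) {a b : L} (h : ⁅a, b⁆ = 0) :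
    pm (a - b) = pm a - pm b := by
  refine eq_sub_of_add_eq ?_
  rw [← hpm.map_add_of_lie_eq_zero (by rw [sub_lie, h, lie_self, sub_zero]), sub_add_cancel]

theorem iterate_add_of_lie_eq_zero (hpm : IsPMap p F L pm) {a b : L} (h : ⁅a, b⁆ = 0)
    (k : ℕ) : pm^[k] (a + b) = pm^[k] a + pm^[k] b := by
  induction k with
  | zero => rfl
  | succ k ih =>
    simp only [Function.iterate_succ_apply']
    rw [ih, hpm.map_add_of_lie_eq_zero (hpm.lie_iterate_eq_zero h k k)]

end IsPMap

section Orbit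

variable {α : Type*} {f : α → α}

def forwardOrbit (f : α → α) (S : Set α) : Set α :=
  {y | ∃ k : ℕ, ∃ s ∈ S, f^[k] s = y}

theorem subset_forwardOrbit (S : Set α) : S ⊆ forwardOrbit f S :=
  fun s hs => ⟨0, s, hs, rfl⟩

theorem image_forwardOrbit (S : Set α) : f '' forwardOrbit f S = forwardOrbit f (f '' S) := by
  ext y
  constructor
  · rintro ⟨_, ⟨k, s, hs, rfl⟩, rfl⟩
    exact ⟨k, f s, ⟨s, hs, rfl⟩, Function.Commute.iterate_self f k s⟩
  · rintro ⟨k, _, ⟨s, hs, rfl⟩, rfl⟩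
    exact ⟨f^[k] s, ⟨k, s, hs, rfl⟩, (Function.Commute.iterate_self f k s).symm⟩

theorem mapsTo_forwardOrbit (S : Set α) :
    Set.MapsTo f (forwardOrbit f S) (forwardOrbit f S) := by
  rintro _ ⟨k, s, hs, rfl⟩
  exact ⟨k + 1, s, hs, Function.iterate_succ_apply' f k s⟩

end Orbit

section Envelope

variable {p : ℕ} {F : Type*} [Field F] {L : Type*} [LieRing L] [LieAlgebra F L] {pm : L → L}

def pEnvelope (F : Type*) [Field F] [LieAlgebra F L] (pm : L → L) (S : Set L) :
    Submodule F L :=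
  Submodule.span F (forwardOrbit pm S)

def pImage (F : Type*) [Field F] [LieAlgebra F L] (pm : L → L) (W : Submodule F L) :
    Submodule F L :=
  Submodule.span F (pm '' W)

structure IsAbelianPClosed (pm : L → L) (C : Submodule F L) : Prop where
  lie_eq_zero : ∀ a ∈ C, ∀ b ∈ C, ⁅a, b⁆ = 0
  mapsTo : Set.MapsTo pm C C

theorem pEnvelope_mono {S T : Set L} (h : S ⊆ T) : pEnvelope F pm S ≤ pEnvelope F pm T := by
  refine Submodule.span_mono ?_
  rintro _ ⟨k, s, hs, rfl⟩
  exact ⟨k, s, h hs, rfl⟩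

theorem mem_pEnvelope {S : Set L} {s : L} (hs : s ∈ S) : s ∈ pEnvelope F pm S :=
  Submodule.subset_span (subset_forwardOrbit S hs)

theorem pImage_mono : Monotone (pImage F pm) :=
  fun _ _ h => Submodule.span_mono (Set.image_mono h)

theorem iterate_mem_iterate_pImage {W : Submodule F L} {a : L} (ha : a ∈ W) (k : ℕ) :
    pm^[k] a ∈ (pImage F pm)^[k] W := by
  induction k with
  | zero => exact ha
  | succ k ih =>
    rw [Function.iterate_succ_apply', Function.iterate_succ_apply']
    exact Submodule.subset_span ⟨_, ih, rfl⟩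

theorem lie_eq_zero_of_mem_span {T : Set L} {y a : L} (h : ∀ t ∈ T, ⁅y, t⁆ = 0)
    (ha : a ∈ Submodule.span F T) : ⁅y, a⁆ = 0 :=
  (Submodule.span_le (p := LinearMap.ker (LieAlgebra.ad F L y))).2 h ha

theorem lie_eq_zero_of_mem_span_of_mem_span {T : Set L} (hT : ∀ a ∈ T, ∀ b ∈ T, ⁅a, b⁆ = 0)
    {a b : L} (ha : a ∈ Submodule.span F T) (hb : b ∈ Submodule.span F T) : ⁅a, b⁆ = 0 := by
  refine lie_eq_zero_of_mem_span (fun t ht => ?_) hb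
  rw [← lie_skew, lie_eq_zero_of_mem_span (hT t ht) ha, neg_zero]

theorem lie_eq_zero_of_mem_singleton {y : L} :
    ∀ a ∈ ({y} : Set L), ∀ b ∈ ({y} : Set L), ⁅a, b⁆ = 0 := by
  rintro _ rfl _ rfl
  exact lie_self _

variable [Fact p.Prime]

theorem IsPMap.lie_eq_zero_of_mem_forwardOrbit (hpm : IsPMap p F L pm) {S : Set L}
    (hS : ∀ a ∈ S, ∀ b ∈ S, ⁅a, b⁆ = 0) :
    ∀ a ∈ forwardOrbit pm S, ∀ b ∈ forwardOrbit pm S, ⁅a, b⁆ = 0 := by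
  rintro _ ⟨i, a, ha, rfl⟩ _ ⟨j, b, hb, rfl⟩
  exact hpm.lie_iterate_eq_zero (hS a ha b hb) i j

variable [CharP F p]

theorem IsPMap.apply_mem_span_image (hpm : IsPMap p F L pm) {T : Set L}
    (hT : ∀ a ∈ T, ∀ b ∈ T, ⁅a, b⁆ = 0) {a : L} (ha : a ∈ Submodule.span F T) :
    pm a ∈ Submodule.span F (pm '' T) := by
  induction ha using Submodule.span_induction with
  | mem u hu => exact Submodule.subset_span ⟨u, hu, rfl⟩
  | zero => rw [hpm.map_zero]; exact Submodule.zero_mem _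
  | add u v hu hv ihu ihv =>
    rw [hpm.map_add_of_lie_eq_zero (lie_eq_zero_of_mem_span_of_mem_span hT hu hv)]
    exact Submodule.add_mem _ ihu ihv
  | smul c u _ ihu => rw [hpm.smul_pow]; exact Submodule.smul_mem _ _ ihu

theorem IsPMap.pImage_span (hpm : IsPMap p F L pm) {T : Set L}
    (hT : ∀ a ∈ T, ∀ b ∈ T, ⁅a, b⁆ = 0) :
    pImage F pm (Submodule.span F T) = Submodule.span F (pm '' T) := by
  refine le_antisymm (Submodule.span_le.2 ?_)
    (Submodule.span_mono (Set.image_mono Submodule.subset_span))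
  rintro _ ⟨a, ha, rfl⟩
  exact hpm.apply_mem_span_image hT ha

theorem IsPMap.pImage_pEnvelope (hpm : IsPMap p F L pm) {S : Set L}
    (hS : ∀ a ∈ S, ∀ b ∈ S, ⁅a, b⁆ = 0) :
    pImage F pm (pEnvelope F pm S) = pEnvelope F pm (pm '' S) := by
  rw [pEnvelope, hpm.pImage_span (hpm.lie_eq_zero_of_mem_forwardOrbit hS), image_forwardOrbit,
    pEnvelope]

theorem IsPMap.isAbelianPClosed_pEnvelope (hpm : IsPMap p F L pm) {S : Set L}
    (hS : ∀ a ∈ S, ∀ b ∈ S, ⁅a, b⁆ = 0) : IsAbelianPClosed pm (pEnvelope F pm S) where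
  lie_eq_zero _ ha _ hb :=
    lie_eq_zero_of_mem_span_of_mem_span (hpm.lie_eq_zero_of_mem_forwardOrbit hS) ha hb
  mapsTo a ha := by
    have := hpm.apply_mem_span_image (hpm.lie_eq_zero_of_mem_forwardOrbit hS) ha
    exact Submodule.span_mono (mapsTo_forwardOrbit S).image_subset this

theorem IsPMap.mem_pSpan_iff (hpm : IsPMap p F L pm) {S : Set L}
    (hS : ∀ a ∈ S, ∀ b ∈ S, ⁅a, b⁆ = 0) {y : L} : y ∈ pSpan F pm S ↔ y ∈ pEnvelope F pm S := by
  have hE := hpm.isAbelianPClosed_pEnvelope hS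
  let H : LieSubalgebra F L :=
    { pEnvelope F pm S with
      lie_mem' := fun ha hb => by rw [hE.lie_eq_zero _ ha _ hb]; exact Submodule.zero_mem _ }
  rw [← LieSubalgebra.mem_coe, pSpan, LieSubalgebra.coe_sInf, Set.mem_iInter₂]
  constructor
  · intro hy
    exact hy H ⟨fun a ha => hE.mapsTo ha, (subset_forwardOrbit S).trans Submodule.subset_span⟩
  · rintro hy K ⟨hK, hSK⟩
    refine (Submodule.span_le (p := K.toSubmodule)).2 ?_ hy
    rintro _ ⟨k, s, hs, rfl⟩
    exact Set.MapsTo.iterate (fun a ha => hK a ha) k (hSK hs)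

theorem IsPMap.isSemisimpleElt_iff (hpm : IsPMap p F L pm) {y : L} :
    IsSemisimpleElt F pm y ↔ y ∈ pImage F pm (pEnvelope F pm {y}) := by
  rw [IsSemisimpleElt, hpm.mem_pSpan_iff lie_eq_zero_of_mem_singleton,
    hpm.pImage_pEnvelope lie_eq_zero_of_mem_singleton, Set.image_singleton]

end Envelope

namespace IsAbelianPClosed

variable {p : ℕ} {F : Type*} [Field F] {L : Type*} [LieRing L] [LieAlgebra F L] {pm : L → L}
  {C : Submodule F L}

theorem pImage_le (hC : IsAbelianPClosed pm C) : pImage F pm C ≤ C :=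
  Submodule.span_le.2 hC.mapsTo.image_subset

theorem isAbelianPClosed_pImage (hC : IsAbelianPClosed pm C) :
    IsAbelianPClosed pm (pImage F pm C) where
  lie_eq_zero a ha b hb := hC.lie_eq_zero a (hC.pImage_le ha) b (hC.pImage_le hb)
  mapsTo a ha := Submodule.subset_span ⟨a, hC.pImage_le ha, rfl⟩

theorem iterate_pImage (hC : IsAbelianPClosed pm C) (k : ℕ) :
    IsAbelianPClosed pm ((pImage F pm)^[k] C) := by
  induction k with
  | zero => exact hC
  | succ k ih => rw [Function.iterate_succ_apply']; exact ih.isAbelianPClosed_pImage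

theorem antitone_iterate_pImage (hC : IsAbelianPClosed pm C) :
    Antitone fun k => (pImage F pm)^[k] C :=
  antitone_nat_of_succ_le fun k => by
    rw [Function.iterate_succ_apply']; exact (hC.iterate_pImage k).pImage_le

variable [Fact p.Prime] [CharP F p] [PerfectRing F p]

/-- `pm` is additive on `C`, and every scalar is a `p`-th power. -/
theorem coe_pImage (hpm : IsPMap p F L pm) (hC : IsAbelianPClosed pm C) :
    (pImage F pm C : Set L) = pm '' C := by
  refine subset_antisymm (fun b hb => ?_) Submodule.subset_span
  induction hb using Submodule.span_induction with
  | mem u hu => exact hu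
  | zero => exact ⟨0, C.zero_mem, hpm.map_zero⟩
  | add u v _ _ ihu ihv =>
    obtain ⟨a, ha, rfl⟩ := ihu
    obtain ⟨b, hb, rfl⟩ := ihv
    exact ⟨a + b, C.add_mem ha hb, hpm.map_add_of_lie_eq_zero (hC.lie_eq_zero a ha b hb)⟩
  | smul c u _ ihu =>
    obtain ⟨a, ha, rfl⟩ := ihu
    refine ⟨(frobeniusEquiv F p).symm c • a, C.smul_mem _ ha, ?_⟩
    rw [hpm.smul_pow, frobeniusEquiv_symm_pow_p]

theorem surjOn_of_le_pImage (hpm : IsPMap p F L pm) (hC : IsAbelianPClosed pm C)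
    (h : C ≤ pImage F pm C) : Set.SurjOn pm C C := by
  rw [Set.SurjOn, ← hC.coe_pImage hpm]
  exact h

/-- The kernels of the iterates `pm^[k]` on `C` form an ascending chain of subspaces; once it
stabilises, surjectivity of `pm` on `C` rules out a nonzero kernel. -/
theorem injOn_of_le_pImage [FiniteDimensional F L] (hpm : IsPMap p F L pm)
    (hC : IsAbelianPClosed pm C) (h : C ≤ pImage F pm C) : Set.InjOn pm C := by
  suffices hker : ∀ u ∈ C, pm u = 0 → u = 0 by
    intro a ha b hb hab
    refine sub_eq_zero.1 (hker _ (C.sub_mem ha hb) ?_)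
    rw [hpm.map_sub_of_lie_eq_zero (hC.lie_eq_zero a ha b hb), hab, sub_self]
  intro u hu hu0
  let K : ℕ →o Submodule F L :=
    { toFun k :=
        { carrier := {a | a ∈ C ∧ pm^[k] a = 0}
          add_mem' := fun ha hb => ⟨C.add_mem ha.1 hb.1, by
            rw [hpm.iterate_add_of_lie_eq_zero (hC.lie_eq_zero _ ha.1 _ hb.1), ha.2, hb.2,
              add_zero]⟩
          zero_mem' := ⟨C.zero_mem, Function.iterate_fixed hpm.map_zero k⟩
          smul_mem' := fun c a ha => ⟨C.smul_mem c ha.1, by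
            rw [hpm.iterate_smul, ha.2, smul_zero]⟩ }
      monotone' := monotone_nat_of_le_succ fun k a ha => ⟨ha.1, by
        rw [Function.iterate_succ_apply', ha.2, hpm.map_zero]⟩ }
  obtain ⟨n, hn⟩ := WellFoundedGT.monotone_chain_condition K
  obtain ⟨w, hw, rfl⟩ := (hC.surjOn_of_le_pImage hpm h).iterate n hu
  have hw' : w ∈ K (n + 1) := ⟨hw, by rw [Function.iterate_succ_apply', hu0]⟩
  rw [← hn (n + 1) n.le_succ] at hw'
  exact hw'.2

theorem le_of_pImage_le (hpm : IsPMap p F L pm) {U U' : Submodule F L}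
    (hU' : IsAbelianPClosed pm U') (hinj : Set.InjOn pm C) (hU : U ≤ C) (hU'C : U' ≤ C)
    (h : pImage F pm U ≤ pImage F pm U') : U ≤ U' := by
  intro a ha
  have : pm a ∈ (pImage F pm U' : Set L) := h (Submodule.subset_span ⟨a, ha, rfl⟩)
  rw [hU'.coe_pImage hpm] at this
  obtain ⟨b, hb, hba⟩ := this
  rwa [hinj (hU'C hb) (hU ha) hba] at hb

theorem le_of_iterate_pImage_le (hpm : IsPMap p F L pm) (hC : IsAbelianPClosed pm C)
    (hinj : Set.InjOn pm C) {U U' : Submodule F L} (hU : U ≤ C) (hU' : IsAbelianPClosed pm U')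
    (hU'C : U' ≤ C) (k : ℕ) (h : (pImage F pm)^[k] U ≤ (pImage F pm)^[k] U') : U ≤ U' := by
  induction k generalizing U U' with
  | zero => exact h
  | succ k ih =>
    simp only [Function.iterate_succ_apply] at h
    refine hU'.le_of_pImage_le hpm hinj hU hU'C (ih ?_ hU'.isAbelianPClosed_pImage ?_ h)
    · exact (pImage_mono hU).trans hC.pImage_le
    · exact hU'.pImage_le.trans hU'C

/-- The envelope `E` of `c` satisfies `pImage E ≤ E`; the descending chain `pImage^[k] E`
stabilises, and since `pImage` is injective on subspaces of `C`, already `E ≤ pImage E`. -/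
theorem isSemisimpleElt_of_mem [FiniteDimensional F L] (hpm : IsPMap p F L pm)
    (hC : IsAbelianPClosed pm C) (h : C ≤ pImage F pm C) {c : L} (hc : c ∈ C) :
    IsSemisimpleElt F pm c := by
  have hE := hpm.isAbelianPClosed_pEnvelope (lie_eq_zero_of_mem_singleton (y := c))
  have hEC : pEnvelope F pm {c} ≤ C := by
    refine Submodule.span_le.2 ?_
    rintro _ ⟨k, _, rfl, rfl⟩
    exact hC.mapsTo.iterate k hc
  obtain ⟨N, hN⟩ := WellFoundedLT.antitone_chain_condition hE.antitone_iterate_pImage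
  have hle : pEnvelope F pm {c} ≤ pImage F pm (pEnvelope F pm {c}) := by
    refine hC.le_of_iterate_pImage_le hpm (hC.injOn_of_le_pImage hpm h) hEC
      hE.isAbelianPClosed_pImage (hE.pImage_le.trans hEC) N ?_
    rw [← Function.iterate_succ_apply, ← hN (N + 1) N.le_succ]
  exact hpm.isSemisimpleElt_iff.2 (hle (mem_pEnvelope rfl))

/-- Fitting's decomposition: on the stable part `V = pImage^[N] C` of the descending chain
`pImage^[k] C` the map `pm` is surjective, so `pm^[N] a ∈ V` has a `pm^[N]`-preimage `v ∈ V`,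
and `v` is semisimple. -/
theorem exists_isSemisimpleElt_iterate_eq [FiniteDimensional F L] (hpm : IsPMap p F L pm)
    (hC : IsAbelianPClosed pm C) {a : L} (ha : a ∈ C) :
    ∃ v ∈ C, IsSemisimpleElt F pm v ∧ ∃ N, pm^[N] v = pm^[N] a := by
  obtain ⟨N, hN⟩ := WellFoundedLT.antitone_chain_condition hC.antitone_iterate_pImage
  have hV := hC.iterate_pImage N
  have hVfix : (pImage F pm)^[N] C ≤ pImage F pm ((pImage F pm)^[N] C) := by
    rw [← Function.iterate_succ_apply' (pImage F pm), ← hN (N + 1) N.le_succ]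
  obtain ⟨v, hv, hva⟩ :=
    (hV.surjOn_of_le_pImage hpm hVfix).iterate N (iterate_mem_iterate_pImage ha N)
  exact ⟨v, hC.antitone_iterate_pImage N.zero_le hv, hV.isSemisimpleElt_of_mem hpm hVfix hv,
    N, hva⟩

end IsAbelianPClosed

namespace IsPMap

variable {p : ℕ} [Fact p.Prime] {F : Type*} [Field F] [CharP F p] {L : Type*} [LieRing L]
  [LieAlgebra F L] {pm : L → L}

theorem pEnvelope_le_pImage_pEnvelope (hpm : IsPMap p F L pm) {S : Set L}
    (hS : ∀ a ∈ S, ∀ b ∈ S, ⁅a, b⁆ = 0) (hss : ∀ s ∈ S, IsSemisimpleElt F pm s) :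
    pEnvelope F pm S ≤ pImage F pm (pEnvelope F pm S) := by
  have hE := (hpm.isAbelianPClosed_pEnvelope hS).isAbelianPClosed_pImage
  refine Submodule.span_le.2 ?_
  rintro _ ⟨k, s, hs, rfl⟩
  have hsE := pImage_mono (pEnvelope_mono (Set.singleton_subset_iff.2 hs))
    (hpm.isSemisimpleElt_iff.1 (hss s hs))
  exact hE.mapsTo.iterate k hsE

/-- `pm` is injective on the envelope of `{s, t}`, which is spanned by semisimple elements. -/
theorem eq_of_iterate_eq [PerfectRing F p] [FiniteDimensional F L] (hpm : IsPMap p F L pm)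
    {s t : L} (hs : IsSemisimpleElt F pm s) (ht : IsSemisimpleElt F pm t) (hst : ⁅s, t⁆ = 0)
    {k : ℕ} (h : pm^[k] s = pm^[k] t) : s = t := by
  have hS : ∀ a ∈ ({s, t} : Set L), ∀ b ∈ ({s, t} : Set L), ⁅a, b⁆ = 0 := by
    rintro a (rfl | rfl) b (rfl | rfl)
    · exact lie_self _
    · exact hst
    · rw [← lie_skew, hst, neg_zero]
    · exact lie_self _
  have hC := hpm.isAbelianPClosed_pEnvelope hS
  have hinj := hC.injOn_of_le_pImage hpm
    (hpm.pEnvelope_le_pImage_pEnvelope hS (by rintro _ (rfl | rfl) <;> assumption))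
  exact hinj.iterate hC.mapsTo k (mem_pEnvelope (by simp)) (mem_pEnvelope (by simp)) h

end IsPMap

/-- **Jordan–Chevalley decomposition.** Over a perfect field of characteristic
`p > 0`, every element of a finite-dimensional restricted Lie algebra has a unique decomposition
`x = x_s + x_n` with `x_s` semisimple, `x_n` `p`-nilpotent and `⁅x_s, x_n⁆ = 0`. -/
theorem exists_unique_jordan_chevalley (p : ℕ) [Fact p.Prime]
    (F : Type*) [Field F] [CharP F p] [PerfectRing F p]
    {L : Type*} [LieRing L] [LieAlgebra F L] [FiniteDimensional F L]
    (pm : L → L) (hpm : IsPMap p F L pm) (x : L) :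
    ∃! q : L × L, IsSemisimpleElt F pm q.1 ∧ IsPNilpotentElt pm q.2 ∧
      ⁅q.1, q.2⁆ = 0 ∧ x = q.1 + q.2 := by
  have hA := hpm.isAbelianPClosed_pEnvelope (lie_eq_zero_of_mem_singleton (y := x))
  have hxA : x ∈ pEnvelope F pm {x} := mem_pEnvelope rfl
  obtain ⟨v, hvA, hv, N, hvx⟩ := hA.exists_isSemisimpleElt_iterate_eq hpm hxA
  have hvn : ⁅v, x - v⁆ = 0 := hA.lie_eq_zero v hvA _ (sub_mem hxA hvA)
  refine ⟨(v, x - v), ⟨hv, ⟨N, ?_⟩, hvn, (add_sub_cancel v x).symm⟩, ?_⟩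
  · simpa [hvx] using hpm.iterate_add_of_lie_eq_zero hvn N
  rintro ⟨s, n⟩ ⟨hs, ⟨m, hn⟩, hsn, rfl⟩
  have hsx : ⁅s, s + n⁆ = 0 := by rw [lie_add, lie_self, hsn, zero_add]
  have hsv : ⁅s, v⁆ = 0 := by
    refine lie_eq_zero_of_mem_span ?_ hvA
    rintro _ ⟨k, _, rfl, rfl⟩
    exact hpm.lie_iterate_eq_zero hsx 0 k
  have hsm : pm^[m] (s + n) = pm^[m] s := by
    rw [hpm.iterate_add_of_lie_eq_zero hsn, hn, add_zero]
  have : s = v := hpm.eq_of_iterate_eq hs hv hsv (k := N + m) <| calc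
    pm^[N + m] s = pm^[N] (pm^[m] (s + n)) := by rw [Function.iterate_add_apply, hsm]
    _ = pm^[m] (pm^[N] (s + n)) := by
      rw [← Function.iterate_add_apply, ← Function.iterate_add_apply, add_comm]
    _ = pm^[N + m] v := by rw [← hvx, ← Function.iterate_add_apply, add_comm]
  subst this
  simp
end
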